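/- arXiv:2604.05143 — 2 statements merged into one kernel-verified Lean document; each statement's English description precedes it below -/
import Mathlib

section
/- Normalization of the candidate survival probability: suppose ε ∈ (0,1) with γ − 1 − ε > 0 and C₀ > 0 with F̄(z) ≤ C₀ z^{−ε} for all z > 0. Let g₁ be the continuous solution on [0, ∞) of the Volterra equation (★) with constant Φ₀ = 1. Then I₁ := ∫₀^∞ g₁(y) dy is finite, the number Φ₀* := 1/(1 + I₁) lies in (0,1), and the function G(u) := Φ₀* (1 + ∫₀ᵘ g₁(y) dy) is strictly increasing on [0, ∞) with G(0) = Φ₀* and lim_{u→∞} G(u) = 1. -/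
open MeasureTheory Filter Set Topology

/-- Tail of a distribution function. -/
noncomputable def Fbar (F : ℝ → ℝ) (x : ℝ) : ℝ := 1 - F x

/-- `F` is the distribution function of a positive random variable: nondecreasing,
right-continuous, vanishing on `(-∞, 0]`, tending to `1` at `+∞`. -/
def IsCDF (F : ℝ → ℝ) : Prop :=
  Monotone F ∧ (∀ x, ContinuousWithinAt F (Set.Ici x) x) ∧
    (∀ x ≤ 0, F x = 0) ∧ Tendsto F atTop (𝓝 1)

/-- The convolution operator `(Bg)(t) = ∫₀ᵗ g(t-y) F̄(y) dy`. -/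
noncomputable def Bop (F g : ℝ → ℝ) (t : ℝ) : ℝ :=
  ∫ y in (0:ℝ)..t, g (t - y) * Fbar F y

/-- `g` is a continuous solution of the Volterra equation (★) on `[0, ∞)`. -/
def IsVolterraSol (γ α μ Φ₀ : ℝ) (F g : ℝ → ℝ) : Prop :=
  ContinuousOn g (Set.Ici 0) ∧
  ∀ u : ℝ, 0 < u → g u = μ * u ^ (-γ) * Real.exp (α / u) *
    ∫ t in (0:ℝ)..u, t ^ (γ - 2) * Real.exp (-α / t) * (Φ₀ * Fbar F t + Bop F g t)

/-!
Write `h = F̄ + B g₁` for the source term, so that (★) reads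
`g₁ u = μ u^{-γ} e^{α/u} ∫₀ᵘ t^{γ-2} e^{-α/t} h t dt`.

Positivity: `h t → 1` as `t → 0⁺`, so `g₁ > 0` near `0`; at a first zero `u₀` of `g₁` the
source would still be `≥ 0` on `(0, u₀)` and `> 0` near `0`, which forces `g₁ u₀ > 0`.

Decay: from `F̄ t ≤ C₀ t^{-ε}` and `g₁ s ≤ C s^{-δ}` one gets `B g₁ t = O(t^{1-δ-ε})`
(split the convolution at `t/2`); inserting this into (★), where `e^{α/u - α/t} ≤ 1`, gives
`g₁ u ≤ K u^{-1-ε} + C L u^{-δ-ε}`. With `δ = 0`, at a running maximum of `g₁` this bounds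
`g₁`; iterating, the decay exponent grows by `ε` per step until it exceeds `1`, so `g₁` is
integrable. The claims on `I₁` and `G` then follow from `g₁ > 0` and integrability.
-/

lemma integral_rpow_of_neg_one_lt {r : ℝ} (hr : -1 < r) (b : ℝ) :
    ∫ x in (0 : ℝ)..b, x ^ r = b ^ (r + 1) / (r + 1) := by
  rw [integral_rpow (Or.inl hr), Real.zero_rpow (by linarith), sub_zero]

lemma forall_pos_of_forall_Ioo_pos {g : ℝ → ℝ} (hg : ContinuousOn g (Ioi 0))
    (hloc : ∀ᶠ s in 𝓝[>] 0, 0 < g s)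
    (hstep : ∀ u, 0 < u → (∀ s ∈ Ioo 0 u, 0 < g s) → 0 < g u) :
    ∀ u, 0 < u → 0 < g u := by
  obtain ⟨v, hv, hvg⟩ := mem_nhdsGT_iff_exists_Ioc_subset.1 hloc
  by_contra! hneg
  obtain ⟨w, hw, hgw⟩ := hneg
  have hvw : v ≤ w := le_of_not_gt fun h => (hvg ⟨hw, h.le⟩ : 0 < g w).not_ge hgw
  set S := Ici v ∩ g ⁻¹' Iic 0
  have hS : IsClosed S :=
    (hg.mono (Ici_subset_Ioi.2 hv)).preimage_isClosed_of_isClosed isClosed_Ici isClosed_Iic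
  have hbdd : BddBelow S := ⟨v, fun s hs => hs.1⟩
  have hmem : sInf S ∈ S := hS.csInf_mem ⟨w, hvw, hgw⟩ hbdd
  refine (hstep _ (lt_of_lt_of_le hv hmem.1) fun s hs => ?_).not_ge hmem.2
  by_contra! hgs
  rcases le_or_gt s v with hsv | hsv
  · exact (hvg ⟨hs.1, hsv⟩ : 0 < g s).not_ge hgs
  · exact hs.2.not_ge (csInf_le hbdd ⟨hsv.le, hgs⟩)

lemma setIntegral_Ioi_pos {g : ℝ → ℝ} {a : ℝ} (hi : IntegrableOn g (Ioi a))
    (hg : ∀ s, a < s → 0 < g s) : 0 < ∫ s in Ioi a, g s := by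
  rw [setIntegral_pos_iff_support_of_nonneg_ae
    ((ae_restrict_iff' measurableSet_Ioi).2 (ae_of_all _ fun s hs => (hg s hs).le)) hi,
    inter_eq_right.2 (show Ioi a ⊆ Function.support g from fun s hs => (hg s hs).ne')]
  simp

lemma strictMonoOn_intervalIntegral {g : ℝ → ℝ} {a : ℝ} (hi : IntegrableOn g (Ioi a))
    (hg : ∀ s, a < s → 0 < g s) : StrictMonoOn (fun u => ∫ s in a..u, g s) (Ici a) := by
  have hii : ∀ x y, a ≤ x → x ≤ y → IntervalIntegrable g volume x y := fun x y hx hxy =>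
    (intervalIntegrable_iff_integrableOn_Ioc_of_le hxy).2 (hi.mono_set fun s hs => hx.trans_lt hs.1)
  intro x hx y hy hxy
  show ∫ s in a..x, g s < ∫ s in a..y, g s
  rw [← intervalIntegral.integral_add_adjacent_intervals (hii a x le_rfl hx) (hii x y hx hxy.le)]
  linarith [intervalIntegral.intervalIntegral_pos_of_pos_on (hii x y hx hxy.le)
    (fun s hs => hg s (lt_of_le_of_lt hx hs.1)) hxy]

namespace IsCDF

variable {F : ℝ → ℝ}

lemma nonneg (hF : IsCDF F) (x : ℝ) : 0 ≤ F x := by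
  rcases le_or_gt x 0 with hx | hx
  · exact (hF.2.2.1 x hx).ge
  · exact (hF.2.2.1 0 le_rfl).ge.trans (hF.1 hx.le)

lemma le_one (hF : IsCDF F) (x : ℝ) : F x ≤ 1 := hF.1.ge_of_tendsto hF.2.2.2 x

lemma fbar_nonneg (hF : IsCDF F) (x : ℝ) : 0 ≤ Fbar F x := sub_nonneg.2 (hF.le_one x)

lemma norm_fbar_le_one (hF : IsCDF F) (x : ℝ) : ‖Fbar F x‖ ≤ 1 := by
  rw [Real.norm_eq_abs, abs_of_nonneg (hF.fbar_nonneg x)]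
  exact sub_le_self _ (hF.nonneg x)

lemma measurable_fbar (hF : IsCDF F) : Measurable (Fbar F) := measurable_const.sub hF.1.measurable

lemma tendsto_fbar_nhdsGT_zero (hF : IsCDF F) : Tendsto (Fbar F) (𝓝[>] 0) (𝓝 1) := by
  have h := ((hF.2.1 0).mono Ioi_subset_Ici_self).tendsto
  rw [hF.2.2.1 0 le_rfl] at h
  show Tendsto (fun x => 1 - F x) _ _
  simpa using (tendsto_const_nhds (x := (1 : ℝ))).sub h

end IsCDF

section Convolution

variable {F g : ℝ → ℝ}

lemma intervalIntegrable_bop_integrand (hF : IsCDF F) (hg : ContinuousOn g (Ici 0)) {t : ℝ}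
    (ht : 0 ≤ t) : IntervalIntegrable (fun y => g (t - y) * Fbar F y) volume 0 t := by
  have hc : ContinuousOn (fun y => g (t - y)) (Icc 0 t) :=
    hg.comp (continuousOn_const.sub continuousOn_id) fun y hy => sub_nonneg.2 hy.2
  rw [intervalIntegrable_iff_integrableOn_Icc_of_le ht]
  exact (hc.integrableOn_compact isCompact_Icc).mul_bdd
    hF.measurable_fbar.aestronglyMeasurable (ae_of_all _ hF.norm_fbar_le_one)

lemma norm_bop_le (hF : IsCDF F) {t M : ℝ} (ht : 0 ≤ t) (hM : ∀ s ∈ Icc 0 t, ‖g s‖ ≤ M) :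
    ‖Bop F g t‖ ≤ M * t := by
  have hM0 : 0 ≤ M := (norm_nonneg _).trans (hM t ⟨ht, le_rfl⟩)
  have h := intervalIntegral.norm_integral_le_of_norm_le_const (C := M)
    (f := fun y => g (t - y) * Fbar F y) (a := 0) (b := t) fun y hy => by
      rw [uIoc_of_le ht] at hy
      rw [norm_mul]
      simpa using mul_le_mul (hM _ ⟨sub_nonneg.2 hy.2, by linarith [hy.1]⟩)
        (hF.norm_fbar_le_one y) (norm_nonneg _) hM0
  rwa [sub_zero, abs_of_nonneg ht] at h

lemma bop_nonneg (hF : IsCDF F) {t : ℝ} (ht : 0 ≤ t) (hg : ∀ s ∈ Ioc 0 t, 0 ≤ g s) :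
    0 ≤ Bop F g t := by
  rw [Bop, intervalIntegral.integral_of_le ht, integral_Ioc_eq_integral_Ioo]
  exact setIntegral_nonneg measurableSet_Ioo fun y hy =>
    mul_nonneg (hg _ ⟨sub_pos.2 hy.2, by linarith [hy.1]⟩) (hF.fbar_nonneg y)

lemma aestronglyMeasurable_bop (hF : IsCDF F) (hg : ContinuousOn g (Ici 0)) :
    AEStronglyMeasurable (Bop F g) (volume.restrict (Ioi 0)) := by
  set g₀ : ℝ → ℝ := fun s => g (max s 0)
  have hg₀ : Continuous g₀ :=
    hg.comp_continuous (continuous_id.max continuous_const) fun s => le_max_right s 0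
  set S : Set (ℝ × ℝ) := {p | 0 < p.2 ∧ p.2 ≤ p.1}
  have hS : MeasurableSet S := (measurableSet_lt measurable_const measurable_snd).inter
    (measurableSet_le measurable_snd measurable_fst)
  have hmeas : StronglyMeasurable
      (S.indicator fun p : ℝ × ℝ => g₀ (p.1 - p.2) * Fbar F p.2) :=
    (((hg₀.comp (continuous_fst.sub continuous_snd)).measurable).mul
      (hF.measurable_fbar.comp measurable_snd)).indicator hS |>.stronglyMeasurable
  refine (hmeas.integral_prod_right' (ν := volume)).aestronglyMeasurable.congr
    ((ae_restrict_iff' measurableSet_Ioi).2 (ae_of_all _ fun t ht => ?_))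
  rw [Bop, intervalIntegral.integral_of_le (le_of_lt ht), ← integral_indicator measurableSet_Ioc]
  refine integral_congr_ae (ae_of_all _ fun y => ?_)
  simp only [indicator, S, mem_ofPred_eq, mem_Ioc]
  split_ifs with hy
  · simp [g₀, max_eq_left (sub_nonneg.2 hy.2)]
  · rfl

-- On `[0, t/2]` the singular factor is `F̄ y ≤ C₀ y^{-ε}` and `g (t - y) ≤ C (t/2)^{-δ}`;
-- on `[t/2, t]` the roles are swapped.
lemma integral_bop_integrand_lower_half_le (hF : IsCDF F) (hg : ContinuousOn g (Ici 0))
    {ε C₀ δ C t : ℝ} (hε1 : ε < 1) (htail : ∀ z, 0 < z → Fbar F z ≤ C₀ * z ^ (-ε))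
    (hδ0 : 0 ≤ δ) (hC : 0 ≤ C) (ht : 0 < t) (hb : ∀ s ∈ Ioc 0 t, g s ≤ C * s ^ (-δ)) :
    ∫ y in (0 : ℝ)..t / 2, g (t - y) * Fbar F y ≤ C * C₀ / (1 - ε) * (t / 2) ^ (1 - δ - ε) := by
  have ht2 : 0 < t / 2 := half_pos ht
  have hi : IntervalIntegrable (fun y => g (t - y) * Fbar F y) volume 0 (t / 2) :=
    (intervalIntegrable_bop_integrand hF hg ht.le).mono_set
      (uIcc_subset_uIcc_left (by simp [ht.le, ht2.le]))
  calc _ ≤ ∫ y in (0 : ℝ)..t / 2, C * (t / 2) ^ (-δ) * C₀ * y ^ (-ε) := by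
        refine intervalIntegral.integral_mono_on_of_le_Ioo ht2.le hi
          ((intervalIntegral.intervalIntegrable_rpow' (by linarith)).const_mul _) fun y hy => ?_
        have hgy : g (t - y) ≤ C * (t / 2) ^ (-δ) :=
          (hb _ ⟨by linarith [hy.2], by linarith [hy.1]⟩).trans (mul_le_mul_of_nonneg_left
            (Real.rpow_le_rpow_of_nonpos ht2 (by linarith [hy.2]) (by linarith)) hC)
        calc g (t - y) * Fbar F y ≤ C * (t / 2) ^ (-δ) * (C₀ * y ^ (-ε)) :=
              mul_le_mul hgy (htail y hy.1) (hF.fbar_nonneg y) (by positivity)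
          _ = _ := by ring
    _ = C * C₀ / (1 - ε) * (t / 2) ^ (1 - δ - ε) := by
        have e : (t / 2) ^ (1 - δ - ε) = (t / 2) ^ (-δ) * (t / 2) ^ (1 - ε) := by
          rw [← Real.rpow_add ht2]; ring_nf
        rw [intervalIntegral.integral_const_mul, integral_rpow_of_neg_one_lt (by linarith),
          show -ε + 1 = 1 - ε by ring, e]
        ring

lemma integral_bop_integrand_upper_half_le (hF : IsCDF F) (hg : ContinuousOn g (Ici 0))
    {ε C₀ δ C t : ℝ} (hε0 : 0 ≤ ε) (hC₀ : 0 ≤ C₀)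
    (htail : ∀ z, 0 < z → Fbar F z ≤ C₀ * z ^ (-ε)) (hδ1 : δ < 1) (hC : 0 ≤ C) (ht : 0 < t)
    (hb : ∀ s ∈ Ioc 0 t, g s ≤ C * s ^ (-δ)) :
    ∫ y in t / 2..t, g (t - y) * Fbar F y ≤ C * C₀ / (1 - δ) * (t / 2) ^ (1 - δ - ε) := by
  have ht2 : 0 < t / 2 := half_pos ht
  have hi : IntervalIntegrable (fun y => g (t - y) * Fbar F y) volume (t / 2) t :=
    (intervalIntegrable_bop_integrand hF hg ht.le).mono_set
      (uIcc_subset_uIcc_right (by simp [ht.le, ht2.le]))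
  have hr : IntervalIntegrable (fun y => (t - y) ^ (-δ)) volume (t / 2) t := by
    simpa [show t - t / 2 = t / 2 by ring] using
      ((intervalIntegral.intervalIntegrable_rpow' (by linarith : -1 < -δ)).comp_sub_left t
        (a := 0) (b := t / 2)).symm
  calc _ ≤ ∫ y in t / 2..t, C * C₀ * (t / 2) ^ (-ε) * (t - y) ^ (-δ) := by
        refine intervalIntegral.integral_mono_on_of_le_Ioo (by linarith) hi (hr.const_mul _)
          fun y hy => ?_
        have hFy : Fbar F y ≤ C₀ * (t / 2) ^ (-ε) :=
          (htail y (ht2.trans hy.1)).trans (mul_le_mul_of_nonneg_left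
            (Real.rpow_le_rpow_of_nonpos ht2 hy.1.le (by linarith)) hC₀)
        calc g (t - y) * Fbar F y ≤ C * (t - y) ^ (-δ) * (C₀ * (t / 2) ^ (-ε)) :=
              mul_le_mul (hb _ ⟨by linarith [hy.2], by linarith [hy.1]⟩) hFy (hF.fbar_nonneg y)
                (mul_nonneg hC (Real.rpow_nonneg (by linarith [hy.2]) _))
          _ = _ := by ring
    _ = C * C₀ / (1 - δ) * (t / 2) ^ (1 - δ - ε) := by
        have e : (t / 2) ^ (1 - δ - ε) = (t / 2) ^ (-ε) * (t / 2) ^ (1 - δ) := by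
          rw [← Real.rpow_add ht2]; ring_nf
        rw [intervalIntegral.integral_const_mul, intervalIntegral.integral_comp_sub_left
            (fun x => x ^ (-δ)), sub_self, show t - t / 2 = t / 2 by ring,
          integral_rpow_of_neg_one_lt (by linarith), show -δ + 1 = 1 - δ by ring, e]
        ring

lemma bop_le_of_le_rpow (hF : IsCDF F) (hg : ContinuousOn g (Ici 0)) {ε C₀ δ C t : ℝ}
    (hε0 : 0 ≤ ε) (hε1 : ε < 1) (hC₀ : 0 ≤ C₀) (htail : ∀ z, 0 < z → Fbar F z ≤ C₀ * z ^ (-ε))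
    (hδ0 : 0 ≤ δ) (hδ1 : δ < 1) (hC : 0 ≤ C) (ht : 0 < t)
    (hb : ∀ s ∈ Ioc 0 t, g s ≤ C * s ^ (-δ)) :
    Bop F g t ≤ C * C₀ * (1 / (1 - ε) + 1 / (1 - δ)) * (t / 2) ^ (1 - δ - ε) := by
  have hi := intervalIntegrable_bop_integrand hF hg ht.le
  have hmid : t / 2 ∈ uIcc 0 t := by simp [ht.le, (half_pos ht).le]
  rw [Bop, ← intervalIntegral.integral_add_adjacent_intervals
    (hi.mono_set (uIcc_subset_uIcc_left hmid)) (hi.mono_set (uIcc_subset_uIcc_right hmid))]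
  linear_combination integral_bop_integrand_lower_half_le hF hg hε1 htail hδ0 hC ht hb +
    integral_bop_integrand_upper_half_le hF hg hε0 hC₀ htail hδ1 hC ht hb

end Convolution

/-- The right-hand side of (★), as an operator on the source term `h = Φ₀ F̄ + B g`. -/
noncomputable def volterraMap (γ α μ : ℝ) (h : ℝ → ℝ) (u : ℝ) : ℝ :=
  μ * u ^ (-γ) * Real.exp (α / u) * ∫ t in (0 : ℝ)..u, t ^ (γ - 2) * Real.exp (-α / t) * h t

section VolterraMap

variable {γ α μ u : ℝ} {h : ℝ → ℝ}

lemma intervalIntegrable_volterra_integrand {C : ℝ} (hγ : 1 < γ) (hα : 0 ≤ α) (hu : 0 ≤ u)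
    (hm : AEStronglyMeasurable h (volume.restrict (Ioc 0 u))) (hC : ∀ t ∈ Ioc 0 u, ‖h t‖ ≤ C) :
    IntervalIntegrable (fun t => t ^ (γ - 2) * Real.exp (-α / t) * h t) volume 0 u := by
  rw [intervalIntegrable_iff_integrableOn_Ioc_of_le hu]
  have hw : IntegrableOn (fun t : ℝ => t ^ (γ - 2)) (Ioc 0 u) :=
    (intervalIntegrable_iff_integrableOn_Ioc_of_le hu).1
      (intervalIntegral.intervalIntegrable_rpow' (by linarith))
  simp_rw [mul_assoc]
  have hexp : Measurable fun t : ℝ => Real.exp (-α / t) := by fun_prop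
  refine hw.mul_bdd (c := C) (hexp.aestronglyMeasurable.mul hm) ?_
  filter_upwards [ae_restrict_mem measurableSet_Ioc] with t ht
  have he : Real.exp (-α / t) ≤ 1 :=
    Real.exp_le_one_iff.2 (div_nonpos_of_nonpos_of_nonneg (by linarith) ht.1.le)
  rw [norm_mul, Real.norm_eq_abs, abs_of_pos (Real.exp_pos _)]
  exact (mul_le_of_le_one_left (norm_nonneg _) he).trans (hC t ht)

lemma integral_volterra_integrand_le {A B a b : ℝ} (hα : 0 ≤ α) (hA : 0 ≤ A) (hB : 0 ≤ B)
    (ha : 0 < γ - 1 + a) (hb : 0 < γ - 1 + b) (hu : 0 < u)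
    (hh : ∀ t ∈ Ioc 0 u, h t ≤ A * t ^ a + B * t ^ b) :
    ∫ t in (0 : ℝ)..u, t ^ (γ - 2) * Real.exp (-α / t) * h t ≤
      Real.exp (-α / u) * (A * (u ^ (γ - 1 + a) / (γ - 1 + a)) +
        B * (u ^ (γ - 1 + b) / (γ - 1 + b))) := by
  by_cases hi : IntervalIntegrable (fun t => t ^ (γ - 2) * Real.exp (-α / t) * h t) volume 0 u
  swap
  · rw [intervalIntegral.integral_undef hi]; positivity
  have hpow : ∀ c, 0 < γ - 1 + c →
      IntervalIntegrable (fun t : ℝ => t ^ (γ - 2 + c)) volume 0 u := fun c hc =>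
    intervalIntegral.intervalIntegrable_rpow' (by linarith)
  calc _ ≤ ∫ t in (0 : ℝ)..u, Real.exp (-α / u) * (A * t ^ (γ - 2 + a) + B * t ^ (γ - 2 + b)) := by
        refine intervalIntegral.integral_mono_on_of_le_Ioo hu.le hi
          ((((hpow a ha).const_mul A).add ((hpow b hb).const_mul B)).const_mul _)
          fun t ht => ?_
        have he : Real.exp (-α / t) ≤ Real.exp (-α / u) := by
          rw [Real.exp_le_exp, neg_div, neg_div, neg_le_neg_iff]
          exact div_le_div_of_nonneg_left hα ht.1 ht.2.le
        have hP : 0 ≤ A * t ^ a + B * t ^ b := by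
          have := Real.rpow_nonneg ht.1.le a; have := Real.rpow_nonneg ht.1.le b; positivity
        have hw : 0 ≤ t ^ (γ - 2) := Real.rpow_nonneg ht.1.le _
        calc t ^ (γ - 2) * Real.exp (-α / t) * h t
            ≤ t ^ (γ - 2) * Real.exp (-α / t) * (A * t ^ a + B * t ^ b) :=
              mul_le_mul_of_nonneg_left (hh t (Ioo_subset_Ioc_self ht)) (by positivity)
          _ ≤ t ^ (γ - 2) * Real.exp (-α / u) * (A * t ^ a + B * t ^ b) := by gcongr
          _ = _ := by rw [Real.rpow_add ht.1, Real.rpow_add ht.1]; ring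
    _ = _ := by
        rw [intervalIntegral.integral_const_mul, intervalIntegral.integral_add
          ((hpow a ha).const_mul A) ((hpow b hb).const_mul B),
          intervalIntegral.integral_const_mul, intervalIntegral.integral_const_mul,
          integral_rpow_of_neg_one_lt (by linarith), integral_rpow_of_neg_one_lt (by linarith)]
        ring_nf

lemma volterraMap_le {A B a b : ℝ} (hα : 0 ≤ α) (hμ : 0 ≤ μ) (hA : 0 ≤ A) (hB : 0 ≤ B)
    (ha : 0 < γ - 1 + a) (hb : 0 < γ - 1 + b) (hu : 0 < u)
    (hh : ∀ t ∈ Ioc 0 u, h t ≤ A * t ^ a + B * t ^ b) :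
    volterraMap γ α μ h u ≤
      μ * A / (γ - 1 + a) * u ^ (a - 1) + μ * B / (γ - 1 + b) * u ^ (b - 1) := by
  have hexp : Real.exp (α / u) * Real.exp (-α / u) = 1 := by
    rw [← Real.exp_add, neg_div, add_neg_cancel, Real.exp_zero]
  have hpow : ∀ c, u ^ (-γ) * u ^ (γ - 1 + c) = u ^ (c - 1) := fun c => by
    rw [← Real.rpow_add hu]; ring_nf
  calc volterraMap γ α μ h u ≤ μ * u ^ (-γ) * Real.exp (α / u) * (Real.exp (-α / u) *
        (A * (u ^ (γ - 1 + a) / (γ - 1 + a)) + B * (u ^ (γ - 1 + b) / (γ - 1 + b)))) :=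
        mul_le_mul_of_nonneg_left (integral_volterra_integrand_le hα hA hB ha hb hu hh)
          (by positivity)
    _ = (Real.exp (α / u) * Real.exp (-α / u)) * (μ * A / (γ - 1 + a) * (u ^ (-γ) *
        u ^ (γ - 1 + a)) + μ * B / (γ - 1 + b) * (u ^ (-γ) * u ^ (γ - 1 + b))) := by ring
    _ = _ := by rw [hexp, hpow, hpow, one_mul]

lemma volterraMap_pos {v : ℝ} (hμ : 0 < μ) (hv : 0 < v) (hvu : v ≤ u)
    (hi : IntervalIntegrable (fun t => t ^ (γ - 2) * Real.exp (-α / t) * h t) volume 0 u)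
    (hnn : ∀ t ∈ Ioo 0 u, 0 ≤ h t) (hpos : ∀ t ∈ Ioo 0 v, 0 < h t) :
    0 < volterraMap γ α μ h u := by
  have hu : 0 < u := hv.trans_le hvu
  have hv_pos : 0 < ∫ t in (0 : ℝ)..v, t ^ (γ - 2) * Real.exp (-α / t) * h t :=
    intervalIntegral.intervalIntegral_pos_of_pos_on
      (hi.mono_set (uIcc_subset_uIcc_left (by simp [uIcc_of_le hu.le, hv.le, hvu])))
      (fun t ht => by have := Real.rpow_pos_of_pos ht.1 (γ - 2); have := hpos t ht; positivity) hv
  have hnn_ae : ∀ᵐ t ∂volume.restrict (Ioc 0 u), 0 ≤ t ^ (γ - 2) * Real.exp (-α / t) * h t := by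
    rw [← Measure.restrict_congr_set Ioo_ae_eq_Ioc]
    filter_upwards [ae_restrict_mem measurableSet_Ioo] with t ht
    have := Real.rpow_pos_of_pos ht.1 (γ - 2); have := hnn t ht; positivity
  have hle := intervalIntegral.integral_mono_interval le_rfl hv.le hvu hnn_ae hi
  unfold volterraMap
  have := Real.rpow_pos_of_pos hu (-γ)
  have : 0 < ∫ t in (0 : ℝ)..u, t ^ (γ - 2) * Real.exp (-α / t) * h t := hv_pos.trans_le hle
  positivity

end VolterraMap

section Solution

variable {γ α μ Φ₀ : ℝ} {F g : ℝ → ℝ}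

lemma IsVolterraSol.eq_volterraMap (hsol : IsVolterraSol γ α μ Φ₀ F g) {u : ℝ} (hu : 0 < u) :
    g u = volterraMap γ α μ (fun t => Φ₀ * Fbar F t + Bop F g t) u :=
  hsol.2 u hu

lemma IsVolterraSol.intervalIntegrable_integrand (hsol : IsVolterraSol γ α μ Φ₀ F g)
    (hF : IsCDF F) (hγ : 1 < γ) (hα : 0 ≤ α) {u : ℝ} (hu : 0 ≤ u) :
    IntervalIntegrable (fun t => t ^ (γ - 2) * Real.exp (-α / t) * (Φ₀ * Fbar F t + Bop F g t))
      volume 0 u := by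
  obtain ⟨M, hM⟩ := isCompact_Icc.exists_bound_of_continuousOn
    (hsol.1.mono (Icc_subset_Ici_self : Icc 0 u ⊆ Ici 0))
  have hM0 : 0 ≤ M := (norm_nonneg _).trans (hM 0 ⟨le_rfl, hu⟩)
  refine intervalIntegrable_volterra_integrand (C := ‖Φ₀‖ + M * u) hγ hα hu
    (((measurable_const.mul hF.measurable_fbar).aestronglyMeasurable).add
      ((aestronglyMeasurable_bop hF hsol.1).mono_measure
        (Measure.restrict_mono Ioc_subset_Ioi_self le_rfl))) fun t ht => ?_
  have hB := norm_bop_le hF ht.1.le fun s hs => hM s ⟨hs.1, hs.2.trans ht.2⟩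
  calc ‖Φ₀ * Fbar F t + Bop F g t‖ ≤ ‖Φ₀‖ * 1 + M * t := by
        refine (norm_add_le _ _).trans (add_le_add ?_ hB)
        rw [norm_mul]
        exact mul_le_mul_of_nonneg_left (hF.norm_fbar_le_one t) (norm_nonneg _)
    _ ≤ ‖Φ₀‖ + M * u := by rw [mul_one]; gcongr; exact ht.2

lemma IsVolterraSol.tendsto_source (hsol : IsVolterraSol γ α μ Φ₀ F g) (hF : IsCDF F) :
    Tendsto (fun t => Φ₀ * Fbar F t + Bop F g t) (𝓝[>] 0) (𝓝 Φ₀) := by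
  obtain ⟨M, hM⟩ := isCompact_Icc.exists_bound_of_continuousOn
    (hsol.1.mono (Icc_subset_Ici_self : Icc (0 : ℝ) 1 ⊆ Ici 0))
  have hB : Tendsto (Bop F g) (𝓝[>] 0) (𝓝 0) := by
    refine squeeze_zero_norm' (a := fun t => M * t) ?_ ?_
    · filter_upwards [Ioc_mem_nhdsGT zero_lt_one] with t ht
      exact norm_bop_le hF ht.1.le fun s hs => hM s ⟨hs.1, hs.2.trans ht.2⟩
    · simpa using ((continuous_const_mul M).tendsto 0).mono_left nhdsWithin_le_nhds
  simpa using (hF.tendsto_fbar_nhdsGT_zero.const_mul Φ₀).add hB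

lemma IsVolterraSol.pos_of_source_nonneg (hsol : IsVolterraSol γ α μ Φ₀ F g) (hF : IsCDF F)
    (hγ : 1 < γ) (hα : 0 ≤ α) (hμ : 0 < μ) (hΦ₀ : 0 < Φ₀) {u : ℝ} (hu : 0 < u)
    (hnn : ∀ t ∈ Ioo 0 u, 0 ≤ Φ₀ * Fbar F t + Bop F g t) : 0 < g u := by
  obtain ⟨v, hv, hvh⟩ := mem_nhdsGT_iff_exists_Ioc_subset.1
    ((hsol.tendsto_source hF).eventually (lt_mem_nhds hΦ₀))
  rw [hsol.eq_volterraMap hu]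
  exact volterraMap_pos hμ (lt_min hv hu) (min_le_right _ _)
    (hsol.intervalIntegrable_integrand hF hγ hα hu.le) hnn
    fun t ht => hvh ⟨ht.1, ht.2.le.trans (min_le_left _ _)⟩

theorem IsVolterraSol.pos (hsol : IsVolterraSol γ α μ Φ₀ F g) (hF : IsCDF F) (hγ : 1 < γ)
    (hα : 0 ≤ α) (hμ : 0 < μ) (hΦ₀ : 0 < Φ₀) {u : ℝ} (hu : 0 < u) : 0 < g u := by
  refine forall_pos_of_forall_Ioo_pos (hsol.1.mono Ioi_subset_Ici_self) ?_ (fun u hu hg => ?_) u hu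
  · obtain ⟨v, hv, hvh⟩ := mem_nhdsGT_iff_exists_Ioc_subset.1
      ((hsol.tendsto_source hF).eventually (lt_mem_nhds hΦ₀))
    exact mem_nhdsGT_iff_exists_Ioc_subset.2 ⟨v, hv, fun u hu =>
      hsol.pos_of_source_nonneg hF hγ hα hμ hΦ₀ hu.1 fun t ht =>
        (hvh ⟨ht.1, ht.2.le.trans hu.2⟩).le⟩
  · refine hsol.pos_of_source_nonneg hF hγ hα hμ hΦ₀ hu fun t ht => add_nonneg
      (mul_nonneg hΦ₀.le (hF.fbar_nonneg t)) (bop_nonneg hF ht.1.le fun s hs => (hg s ?_).le)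
    exact ⟨hs.1, hs.2.trans_lt ht.2⟩

lemma IsVolterraSol.exists_le_rpow_of_le_rpow (hsol : IsVolterraSol γ α μ Φ₀ F g)
    (hF : IsCDF F) (hα : 0 ≤ α) (hμ : 0 ≤ μ) (hΦ₀ : 0 ≤ Φ₀) {ε C₀ δ : ℝ} (hε0 : 0 ≤ ε)
    (hε1 : ε < 1) (hγε : 0 < γ - 1 - ε) (hC₀ : 0 ≤ C₀)
    (htail : ∀ z, 0 < z → Fbar F z ≤ C₀ * z ^ (-ε)) (hδ0 : 0 ≤ δ) (hδ1 : δ < 1) :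
    ∃ K L : ℝ, 0 ≤ K ∧ 0 ≤ L ∧ ∀ C u, 0 ≤ C → 0 < u → (∀ s ∈ Ioc 0 u, g s ≤ C * s ^ (-δ)) →
      g u ≤ K * u ^ (-1 - ε) + C * L * u ^ (-δ - ε) := by
  set L₀ := C₀ * (1 / (1 - ε) + 1 / (1 - δ)) * 2 ^ (δ + ε - 1)
  have hL₀ : 0 ≤ L₀ := by
    have := sub_pos.2 hε1; have := sub_pos.2 hδ1; have := Real.rpow_pos_of_pos two_pos (δ + ε - 1)
    positivity
  have hγδε : 0 < γ - δ - ε := by linarith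
  refine ⟨μ * (Φ₀ * C₀) / (γ - 1 - ε), μ * L₀ / (γ - δ - ε), by positivity, by positivity,
    fun C u hC hu hb => ?_⟩
  have hsrc : ∀ t ∈ Ioc 0 u,
      Φ₀ * Fbar F t + Bop F g t ≤ Φ₀ * C₀ * t ^ (-ε) + C * L₀ * t ^ (1 - δ - ε) := by
    intro t ht
    have hB := bop_le_of_le_rpow hF hsol.1 hε0 hε1 hC₀ htail hδ0 hδ1 hC ht.1
      fun s hs => hb s ⟨hs.1, hs.2.trans ht.2⟩
    have h2 : (t / 2) ^ (1 - δ - ε) = 2 ^ (δ + ε - 1) * t ^ (1 - δ - ε) := by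
      rw [Real.div_rpow ht.1.le zero_le_two, show δ + ε - 1 = -(1 - δ - ε) by ring,
        Real.rpow_neg zero_le_two, div_eq_inv_mul]
    have hF' := mul_le_mul_of_nonneg_left (htail t ht.1) hΦ₀
    rw [h2] at hB
    linarith
  have h := volterraMap_le hα hμ (by positivity) (by positivity)
    (by linarith : 0 < γ - 1 + -ε) (by linarith : 0 < γ - 1 + (1 - δ - ε)) hu hsrc
  rw [← hsol.eq_volterraMap hu] at h
  convert h using 2 <;> ring_nf

lemma IsVolterraSol.exists_forall_le (hsol : IsVolterraSol γ α μ Φ₀ F g)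
    (hF : IsCDF F) (hα : 0 ≤ α) (hμ : 0 ≤ μ) (hΦ₀ : 0 ≤ Φ₀) {ε C₀ : ℝ} (hε0 : 0 < ε)
    (hε1 : ε < 1) (hγε : 0 < γ - 1 - ε) (hC₀ : 0 ≤ C₀)
    (htail : ∀ z, 0 < z → Fbar F z ≤ C₀ * z ^ (-ε)) :
    ∃ M, 0 ≤ M ∧ ∀ s, 0 ≤ s → g s ≤ M := by
  obtain ⟨K, L, hK, hL, hmain⟩ := hsol.exists_le_rpow_of_le_rpow hF hα hμ hΦ₀ hε0.le hε1 hγε hC₀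
    htail le_rfl one_pos
  -- beyond `u₁` the equation forces a running maximum `m` to satisfy `m ≤ K + m / 2`
  obtain ⟨u₁, hu₁⟩ := eventually_atTop.1 ((((tendsto_rpow_neg_atTop hε0).const_mul L).eventually
    (gt_mem_nhds (by norm_num : L * 0 < 1 / 2))).and (eventually_ge_atTop 1))
  obtain ⟨M₀, hM₀⟩ := isCompact_Icc.exists_bound_of_continuousOn
    (hsol.1.mono (Icc_subset_Ici_self : Icc 0 u₁ ⊆ Ici 0))
  refine ⟨max M₀ (2 * K), le_max_of_le_right (by positivity), fun s hs => ?_⟩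
  obtain ⟨w, hw, hwmax⟩ := isCompact_Icc.exists_isMaxOn
    (nonempty_Icc.2 (hs.trans (le_max_left s u₁)))
    (hsol.1.mono (Icc_subset_Ici_self : Icc 0 (max s u₁) ⊆ Ici 0))
  refine (hwmax ⟨hs, le_max_left _ _⟩ : g s ≤ g w).trans ?_
  rcases le_or_gt w u₁ with hwu | hwu
  · exact le_max_of_le_left ((le_abs_self _).trans (hM₀ w ⟨hw.1, hwu⟩))
  rcases le_or_gt (g w) 0 with hgw | hgw
  · exact hgw.trans (le_max_of_le_right (by positivity))
  obtain ⟨hLw, hw1⟩ := hu₁ w hwu.le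
  have hw0 : 0 < w := zero_lt_one.trans_le hw1
  have h := hmain (g w) w hgw.le hw0 fun r hr => by
    simpa using (hwmax ⟨hr.1.le, hr.2.trans hw.2⟩ : g r ≤ g w)
  have hw' : w ^ (-1 - ε) ≤ 1 := Real.rpow_le_one_of_one_le_of_nonpos hw1 (by linarith)
  rw [neg_zero, zero_sub] at h
  exact le_max_of_le_right (by nlinarith)

def RpowDominated (g : ℝ → ℝ) (ρ : ℝ) : Prop :=
  ∃ C, 0 ≤ C ∧ ∀ s, 0 < s → g s ≤ C * s ^ (-ρ)

lemma IsVolterraSol.rpowDominated_of_le_add (hsol : IsVolterraSol γ α μ Φ₀ F g)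
    (hF : IsCDF F) (hα : 0 ≤ α) (hμ : 0 ≤ μ) (hΦ₀ : 0 ≤ Φ₀) {ε C₀ ρ ρ' : ℝ} (hε0 : 0 < ε)
    (hε1 : ε < 1) (hγε : 0 < γ - 1 - ε) (hC₀ : 0 ≤ C₀)
    (htail : ∀ z, 0 < z → Fbar F z ≤ C₀ * z ^ (-ε)) (hρ0 : 0 ≤ ρ) (hρ1 : ρ < 1)
    (hρ'0 : 0 ≤ ρ') (hρ' : ρ' ≤ ρ + ε) (h : RpowDominated g ρ) : RpowDominated g ρ' := by
  obtain ⟨C, hC, hgC⟩ := h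
  obtain ⟨K, L, hK, hL, hmain⟩ := hsol.exists_le_rpow_of_le_rpow hF hα hμ hΦ₀ hε0.le hε1 hγε
    hC₀ htail hρ0 hρ1
  obtain ⟨M, hM0, hM⟩ := hsol.exists_forall_le hF hα hμ hΦ₀ hε0 hε1 hγε hC₀ htail
  refine ⟨K + C * L + M, by positivity, fun s hs => ?_⟩
  have hs' := Real.rpow_nonneg hs.le (-ρ')
  rcases le_or_gt 1 s with hs1 | hs1
  · have e1 : s ^ (-1 - ε) ≤ s ^ (-ρ') := Real.rpow_le_rpow_of_exponent_le hs1 (by linarith)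
    have e2 : s ^ (-ρ - ε) ≤ s ^ (-ρ') := Real.rpow_le_rpow_of_exponent_le hs1 (by linarith)
    nlinarith [hmain C s hC hs fun r hr => hgC r hr.1, mul_le_mul_of_nonneg_left e1 hK,
      mul_le_mul_of_nonneg_left e2 (mul_nonneg hC hL)]
  · have e : 1 ≤ s ^ (-ρ') := Real.one_le_rpow_of_pos_of_le_one_of_nonpos hs hs1.le (by linarith)
    calc g s ≤ M := hM s hs.le
      _ ≤ M * s ^ (-ρ') := le_mul_of_one_le_right hM0 e
      _ ≤ (K + C * L + M) * s ^ (-ρ') :=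
          mul_le_mul_of_nonneg_right (by nlinarith [mul_nonneg hC hL]) hs'

lemma IsVolterraSol.exists_one_lt_rpowDominated (hsol : IsVolterraSol γ α μ Φ₀ F g)
    (hF : IsCDF F) (hα : 0 ≤ α) (hμ : 0 ≤ μ) (hΦ₀ : 0 ≤ Φ₀) {ε C₀ : ℝ} (hε0 : 0 < ε)
    (hε1 : ε < 1) (hγε : 0 < γ - 1 - ε) (hC₀ : 0 ≤ C₀)
    (htail : ∀ z, 0 < z → Fbar F z ≤ C₀ * z ^ (-ε)) :
    ∃ ρ, 1 < ρ ∧ RpowDominated g ρ := by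
  have step := fun ρ ρ' => hsol.rpowDominated_of_le_add (ρ := ρ) (ρ' := ρ') hF hα hμ hΦ₀ hε0 hε1
    hγε hC₀ htail
  -- a step needs `ρ < 1`, so the exponent is capped at `1 - ε / 2` before the last step
  have hiter : ∀ n : ℕ, RpowDominated g (min (n * ε) (1 - ε / 2)) := by
    intro n
    induction n with
    | zero =>
      obtain ⟨M, hM0, hM⟩ := hsol.exists_forall_le hF hα hμ hΦ₀ hε0 hε1 hγε hC₀ htail
      refine ⟨M, hM0, fun s hs => ?_⟩
      simpa [min_eq_left (by linarith : (0 : ℝ) ≤ 1 - ε / 2)] using hM s hs.le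
    | succ n ih =>
      refine step _ _ (le_min (by positivity) (by linarith))
        ((min_le_right _ _).trans_lt (by linarith)) (le_min (by positivity) (by linarith)) ?_ ih
      calc min ((n + 1 : ℕ) * ε) (1 - ε / 2) ≤ min (n * ε + ε) (1 - ε / 2 + ε) :=
            min_le_min (by push_cast; linarith) (by linarith)
        _ = min (n * ε) (1 - ε / 2) + ε := min_add_add_right _ _ _
  obtain ⟨n, hn⟩ := exists_nat_ge ((1 - ε / 2) / ε)
  have hmin : min (n * ε) (1 - ε / 2) = 1 - ε / 2 :=
    min_eq_right (by rwa [div_le_iff₀ hε0] at hn)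
  exact ⟨1 + ε / 2, by linarith,
    step _ _ (by linarith) (by linarith) (by linarith) (by linarith) (hmin ▸ hiter n)⟩

theorem IsVolterraSol.integrableOn_Ioi (hsol : IsVolterraSol γ α μ Φ₀ F g) (hF : IsCDF F)
    (hγ : 1 < γ) (hα : 0 ≤ α) (hμ : 0 < μ) (hΦ₀ : 0 < Φ₀) {ε C₀ : ℝ} (hε0 : 0 < ε)
    (hε1 : ε < 1) (hγε : 0 < γ - 1 - ε) (hC₀ : 0 ≤ C₀)
    (htail : ∀ z, 0 < z → Fbar F z ≤ C₀ * z ^ (-ε)) :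
    IntegrableOn g (Ioi 0) := by
  obtain ⟨ρ, hρ, C, -, hgC⟩ := hsol.exists_one_lt_rpowDominated hF hα hμ.le hΦ₀.le hε0 hε1 hγε
    hC₀ htail
  have hnear : IntegrableOn g (Ioc 0 1) :=
    ((hsol.1.mono (Icc_subset_Ici_self : Icc (0 : ℝ) 1 ⊆ Ici 0)).integrableOn_compact
      isCompact_Icc).mono_set Ioc_subset_Icc_self
  have hfar : IntegrableOn g (Ioi 1) := by
    refine Integrable.mono'
      ((integrableOn_Ioi_rpow_of_lt (by linarith : -ρ < -1) one_pos).const_mul C)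
      ((hsol.1.mono fun s (hs : 1 < s) => (zero_lt_one.trans hs).le).aestronglyMeasurable
        measurableSet_Ioi) ?_
    filter_upwards [ae_restrict_mem measurableSet_Ioi] with s hs
    have hs0 : 0 < s := zero_lt_one.trans hs
    rw [Real.norm_eq_abs, abs_of_pos (hsol.pos hF hγ hα hμ hΦ₀ hs0)]
    exact hgC s hs0
  rw [← Ioc_union_Ioi_eq_Ioi zero_le_one]
  exact hnear.union hfar

end Solution

theorem stmt11 (γ α μ : ℝ) (hγ : 1 < γ) (hα : 0 < α) (hμ : 0 < μ)
    (F : ℝ → ℝ) (hF : IsCDF F)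
    (ε C₀ : ℝ) (hε : ε ∈ Set.Ioo (0:ℝ) 1) (hγε : 0 < γ - 1 - ε) (hC₀ : 0 < C₀)
    (htail : ∀ z : ℝ, 0 < z → Fbar F z ≤ C₀ * z ^ (-ε))
    (g₁ : ℝ → ℝ) (hg₁ : IsVolterraSol γ α μ 1 F g₁)
    (I₁ : ℝ) (hI₁ : I₁ = ∫ y in Set.Ioi (0:ℝ), g₁ y)
    (G : ℝ → ℝ) (hG : ∀ u : ℝ, G u = (1 / (1 + I₁)) * (1 + ∫ y in (0:ℝ)..u, g₁ y)) :
    IntegrableOn g₁ (Set.Ioi 0) volume ∧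
    (1 / (1 + I₁)) ∈ Set.Ioo (0:ℝ) 1 ∧
    StrictMonoOn G (Set.Ici 0) ∧ G 0 = 1 / (1 + I₁) ∧
    Tendsto G atTop (𝓝 1) := by
  obtain ⟨hε0, hε1⟩ := hε
  have hpos : ∀ s, 0 < s → 0 < g₁ s := fun s hs => hg₁.pos hF hγ hα.le hμ one_pos hs
  have hint : IntegrableOn g₁ (Ioi 0) :=
    hg₁.integrableOn_Ioi hF hγ hα.le hμ one_pos hε0 hε1 hγε hC₀.le htail
  have hI₁pos : 0 < I₁ := hI₁ ▸ setIntegral_Ioi_pos hint hpos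
  have hc : 1 / (1 + I₁) ∈ Ioo (0 : ℝ) 1 :=
    ⟨by positivity, by rw [div_lt_one (by positivity)]; linarith⟩
  refine ⟨hint, hc, fun x hx y hy hxy => ?_, by simp [hG], ?_⟩
  · rw [hG, hG]
    have := strictMonoOn_intervalIntegral hint hpos hx hy hxy
    exact mul_lt_mul_of_pos_left (by simpa using this) hc.1
  · have hlim := ((intervalIntegral_tendsto_integral_Ioi 0 hint tendsto_id).const_add 1).const_mul
      (1 / (1 + I₁))
    rw [← hI₁, one_div_mul_cancel (by positivity)] at hlim
    exact hlim.congr fun u => (hG u).symm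
end

section
/- Almost-everywhere differential equation: let g be a continuous solution of the Volterra equation (★) on [0, ∞) that is bounded. Then g is locally absolutely continuous on (0, ∞): there exists a locally Lebesgue-integrable function h : (0, ∞) → ℝ such that g(b) − g(a) = ∫ₐᵇ h(t) dt for all 0 < a < b, and for almost every u > 0 (with h(u) serving as the derivative g′(u)) the identity u² h(u) + (γ u + α) g(u) = μ Φ₀ F̄(u) + μ (Bg)(u) holds. -/
open MeasureTheory Filter Set Topology

/-!
Write (★) as `g u = μ P(u) ∫₀ᵘ w(t) S(t) dt` with `P(u) = u^(-γ) e^(α/u)`,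
`w(t) = t^(γ-2) e^(-α/t)` and `S = Φ₀ F̄ + Bg`. Since `γ > 1` and `α ≥ 0`, `w` is integrable
at `0`, while `S` is locally bounded. `F̄` is right-continuous and `Bg` is continuous, so `S` is
right-continuous and `g` has at every `u > 0` the right derivative
`P'(u)/P(u) g(u) + μ P(u) w(u) S(u) = (μ S(u) - (γ u + α) g(u)) / u²`.
This function is locally integrable on `(0, ∞)`, and a continuous function with an integrable
right derivative is the integral of that derivative.
-/

open Real

section Tail

variable {F : ℝ → ℝ}

theorem Fbar_nonneg (hF : IsCDF F) (x : ℝ) : 0 ≤ Fbar F x := by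
  have := hF.1.ge_of_tendsto hF.2.2.2 x
  rw [Fbar]; linarith

theorem Fbar_le_one (hF : IsCDF F) (x : ℝ) : Fbar F x ≤ 1 := by
  have : F (min x 0) ≤ F x := hF.1 (min_le_left x 0)
  rw [hF.2.2.1 _ (min_le_right x 0)] at this
  rw [Fbar]; linarith

theorem antitone_Fbar (hF : IsCDF F) : Antitone (Fbar F) :=
  fun _ _ hxy => sub_le_sub_left (hF.1 hxy) 1

theorem continuousWithinAt_Fbar (hF : IsCDF F) (x : ℝ) :
    ContinuousWithinAt (Fbar F) (Ici x) x :=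
  continuousWithinAt_const.sub (hF.2.1 x)

end Tail

theorem intervalIntegral_withDensity_eq_intervalIntegral_mul {f : ℝ → ℝ} (hf : Measurable f)
    (hf0 : 0 ≤ f) (k : ℝ → ℝ) {t : ℝ} (ht : 0 ≤ t) :
    ∫ y in (0:ℝ)..t, k y ∂(volume.withDensity fun y => ENNReal.ofReal (f y)) =
      ∫ y in (0:ℝ)..t, k y * f y := by
  rw [intervalIntegral.integral_of_le ht, intervalIntegral.integral_of_le ht]
  simp only [ENNReal.ofReal]
  rw [setIntegral_withDensity_eq_setIntegral_smul hf.real_toNNReal _ measurableSet_Ioc]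
  refine setIntegral_congr_fun measurableSet_Ioc fun y _ => ?_
  simp [NNReal.smul_def, Real.coe_toNNReal _ (hf0 y), mul_comm]

/-- Extending `g` by `g 0` to the left makes `(t, y) ↦ g (t - y)` jointly continuous, so the
integral is a parametric primitive against the locally finite measure `f y dy`. -/
theorem continuousOn_intervalIntegral_sub_mul {f g : ℝ → ℝ} (hf : Measurable f) (hf0 : 0 ≤ f)
    (hf1 : f ≤ 1) (hg : ContinuousOn g (Ici 0)) :
    ContinuousOn (fun t => ∫ y in (0:ℝ)..t, g (t - y) * f y) (Ici 0) := by
  set ν := volume.withDensity fun y => ENNReal.ofReal (f y)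
  have : IsLocallyFiniteMeasure ν := Measure.isLocallyFiniteMeasure_of_le (μ := volume) <| by
    refine (withDensity_mono (ae_of_all _ fun y => ?_)).trans withDensity_one.le
    simpa using hf1 y
  have hg' : Continuous fun s => g (max s 0) :=
    hg.comp_continuous (continuous_id.max continuous_const) fun s => le_max_right s 0
  have hcont := intervalIntegral.continuous_parametric_intervalIntegral_of_continuous (μ := ν)
    (f := fun t y => g (max (t - y) 0)) (a₀ := 0)
    (hg'.comp (continuous_fst.sub continuous_snd)) continuous_id
  refine hcont.continuousOn.congr fun t ht => ?_
  dsimp only [id_eq]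
  rw [intervalIntegral_withDensity_eq_intervalIntegral_mul hf hf0 _ ht]
  refine intervalIntegral.integral_congr fun y hy => ?_
  rw [uIcc_of_le (mem_Ici.1 ht)] at hy
  simp only [max_eq_left (sub_nonneg.2 hy.2)]

theorem continuousOn_Bop {F g : ℝ → ℝ} (hF : IsCDF F) (hg : ContinuousOn g (Ici 0)) :
    ContinuousOn (Bop F g) (Ici 0) :=
  continuousOn_intervalIntegral_sub_mul (antitone_Fbar hF).measurable (Fbar_nonneg hF)
    (Fbar_le_one hF) hg

theorem hasDerivAt_rpow_neg_mul_exp_div (γ α : ℝ) {x : ℝ} (hx : 0 < x) :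
    HasDerivAt (fun u => u ^ (-γ) * exp (α / u))
      (-(γ * x + α) / x ^ 2 * (x ^ (-γ) * exp (α / x))) x := by
  have hpow := hasDerivAt_rpow_const (p := -γ) (Or.inl hx.ne')
  have hexp := ((hasDerivAt_inv hx.ne').const_mul α).exp
  simp only [← div_eq_mul_inv] at hexp
  refine (hpow.mul hexp).congr_deriv ?_
  rw [rpow_sub hx, rpow_one]
  field_simp
  ring

theorem rpow_neg_mul_exp_div_mul_rpow_sub_two_mul_exp (γ α : ℝ) {x : ℝ} (hx : 0 < x) :
    x ^ (-γ) * exp (α / x) * (x ^ (γ - 2) * exp (-α / x)) = (x ^ 2)⁻¹ := by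
  rw [mul_mul_mul_comm, ← rpow_add hx, ← exp_add, neg_div, add_neg_cancel, exp_zero, mul_one,
    show -γ + (γ - 2) = -2 by ring, rpow_neg hx.le, rpow_two]

theorem intervalIntegrable_rpow_mul_exp_neg_div_mul {γ α u C : ℝ} {S : ℝ → ℝ} (hγ : 1 < γ)
    (hα : 0 ≤ α) (hu : 0 ≤ u) (hS_meas : AEStronglyMeasurable S (volume.restrict (Ioc 0 u)))
    (hS_bdd : ∀ t ∈ Ioc 0 u, ‖S t‖ ≤ C) :
    IntervalIntegrable (fun t => t ^ (γ - 2) * exp (-α / t) * S t) volume 0 u := by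
  rw [intervalIntegrable_iff_integrableOn_Ioc_of_le hu]
  have hpow : IntegrableOn (fun t : ℝ => t ^ (γ - 2)) (Ioc 0 u) :=
    (intervalIntegral.intervalIntegrable_rpow' (by linarith)).1
  have hbdd : ∀ᵐ t ∂volume.restrict (Ioc 0 u), ‖exp (-α / t) * S t‖ ≤ C := by
    refine ae_restrict_of_forall_mem measurableSet_Ioc fun t ht => ?_
    have hexp : ‖exp (-α / t)‖ ≤ 1 := by
      rw [norm_of_nonneg (exp_pos _).le, exp_le_one_iff]
      exact div_nonpos_of_nonpos_of_nonneg (neg_nonpos.2 hα) ht.1.le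
    rw [norm_mul]
    exact (mul_le_of_le_one_left (norm_nonneg _) hexp).trans (hS_bdd t ht)
  have hexp_meas : Measurable fun t : ℝ => exp (-α / t) := by fun_prop
  refine (hpow.bdd_mul (hexp_meas.aestronglyMeasurable.mul hS_meas) hbdd).congr
    (ae_of_all _ fun t => ?_)
  simp only [Pi.mul_apply]
  ring

section ForcingTerm

variable {Φ₀ : ℝ} {F g : ℝ → ℝ}

theorem aestronglyMeasurable_const_mul_Fbar_add_Bop (hF : IsCDF F)
    (hg : ContinuousOn g (Ici 0)) :
    AEStronglyMeasurable (fun t => Φ₀ * Fbar F t + Bop F g t) (volume.restrict (Ici 0)) :=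
  ((antitone_Fbar hF).measurable.const_mul Φ₀).aestronglyMeasurable.add
    ((continuousOn_Bop hF hg).aestronglyMeasurable measurableSet_Ici)

theorem exists_bound_const_mul_Fbar_add_Bop (hF : IsCDF F) (hg : ContinuousOn g (Ici 0))
    (u : ℝ) :
    ∃ C, ∀ t ∈ Icc 0 u, ‖Φ₀ * Fbar F t + Bop F g t‖ ≤ C := by
  obtain ⟨C, hC⟩ := isCompact_Icc.exists_bound_of_continuousOn
    ((continuousOn_Bop hF hg).mono fun t ht => ht.1)
  refine ⟨‖Φ₀‖ + C, fun t ht => (norm_add_le _ _).trans (add_le_add ?_ (hC t ht))⟩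
  rw [norm_mul, Real.norm_of_nonneg (Fbar_nonneg hF t)]
  exact mul_le_of_le_one_right (norm_nonneg _) (Fbar_le_one hF t)

theorem continuousWithinAt_const_mul_Fbar_add_Bop (hF : IsCDF F) (hg : ContinuousOn g (Ici 0))
    {x : ℝ} (hx : 0 < x) :
    ContinuousWithinAt (fun t => Φ₀ * Fbar F t + Bop F g t) (Ici x) x :=
  (continuousWithinAt_const.mul (continuousWithinAt_Fbar hF x)).add
    ((continuousOn_Bop hF hg).continuousAt (Ici_mem_nhds hx)).continuousWithinAt

end ForcingTerm

noncomputable def volterraDeriv (γ α μ Φ₀ : ℝ) (F g : ℝ → ℝ) (u : ℝ) : ℝ :=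
  (μ * (Φ₀ * Fbar F u + Bop F g u) - (γ * u + α) * g u) / u ^ 2

theorem locallyIntegrableOn_volterraDeriv {γ α μ Φ₀ : ℝ} {F g : ℝ → ℝ} (hF : IsCDF F)
    (hg : ContinuousOn g (Ici 0)) :
    LocallyIntegrableOn (volterraDeriv γ α μ Φ₀ F g) (Ioi 0) := by
  have hsplit : volterraDeriv γ α μ Φ₀ F g = fun u =>
      Fbar F u * (μ * Φ₀ / u ^ 2) + (μ * Bop F g u - (γ * u + α) * g u) / u ^ 2 := by
    funext u
    rw [volterraDeriv]
    ring
  have hg' : ContinuousOn g (Ioi 0) := hg.mono Ioi_subset_Ici_self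
  have hB : ContinuousOn (Bop F g) (Ioi 0) := (continuousOn_Bop hF hg).mono Ioi_subset_Ici_self
  have hsq : ∀ u ∈ Ioi (0:ℝ), u ^ 2 ≠ 0 := fun u hu => pow_ne_zero 2 (ne_of_gt hu)
  rw [hsplit]
  refine (((antitone_Fbar hF).locallyIntegrable.locallyIntegrableOn _).mul_continuousOn
    (continuousOn_const.div (continuousOn_pow 2) hsq) isOpen_Ioi.isLocallyClosed).add
    (ContinuousOn.locallyIntegrableOn ?_ measurableSet_Ioi)
  exact ((continuousOn_const.mul hB).sub
    ((continuousOn_const.mul continuousOn_id).add continuousOn_const |>.mul hg')).div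
    (continuousOn_pow 2) hsq

namespace IsVolterraSol

variable {γ α μ Φ₀ : ℝ} {F g : ℝ → ℝ}

theorem hasDerivWithinAt_Ioi (hγ : 1 < γ) (hα : 0 ≤ α) (hF : IsCDF F)
    (hg : IsVolterraSol γ α μ Φ₀ F g) {x : ℝ} (hx : 0 < x) :
    HasDerivWithinAt g (volterraDeriv γ α μ Φ₀ F g x) (Ioi x) x := by
  set S := fun t => Φ₀ * Fbar F t + Bop F g t
  set φ := fun t => t ^ (γ - 2) * exp (-α / t) * S t
  have hw : ContinuousOn (fun t : ℝ => t ^ (γ - 2) * exp (-α / t)) (Ioi 0) := by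
    fun_prop (disch := exact fun t ht => ne_of_gt ht)
  have hS_meas := aestronglyMeasurable_const_mul_Fbar_add_Bop (Φ₀ := Φ₀) hF hg.1
  have hφ_meas : AEStronglyMeasurable φ (volume.restrict (Ioi 0)) :=
    (hw.aestronglyMeasurable measurableSet_Ioi).mul
      (hS_meas.mono_measure (Measure.restrict_mono Ioi_subset_Ici_self le_rfl))
  obtain ⟨C, hC⟩ := exists_bound_const_mul_Fbar_add_Bop (Φ₀ := Φ₀) hF hg.1 x
  have hφ_int : IntervalIntegrable φ volume 0 x :=
    intervalIntegrable_rpow_mul_exp_neg_div_mul hγ hα hx.le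
      (hS_meas.mono_measure
        (Measure.restrict_mono (Ioc_subset_Icc_self.trans Icc_subset_Ici_self) le_rfl))
      fun t ht => hC t (Ioc_subset_Icc_self ht)
  have hφ_cont : ContinuousWithinAt φ (Ioi x) x :=
    ((hw x hx).continuousAt (Ioi_mem_nhds hx)).continuousWithinAt.mul
      ((continuousWithinAt_const_mul_Fbar_add_Bop hF hg.1 hx).mono Ioi_subset_Ici_self)
  have hprim : HasDerivWithinAt (fun u => ∫ t in (0:ℝ)..u, φ t) (φ x) (Ioi x) x :=
    (intervalIntegral.integral_hasDerivWithinAt_right (s := Ici x) hφ_int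
      ⟨Ioi 0, nhdsWithin_le_nhds (Ioi_mem_nhds hx), hφ_meas⟩ hφ_cont).mono Ioi_subset_Ici_self
  have hsol :
      g =ᶠ[𝓝[Ioi x] x] fun u => μ * (u ^ (-γ) * exp (α / u)) * ∫ t in (0:ℝ)..u, φ t := by
    filter_upwards [nhdsWithin_le_nhds (Ioi_mem_nhds hx)] with u hu
    rw [hg.2 u hu, mul_assoc μ]
  have hgx : g x = μ * (x ^ (-γ) * exp (α / x)) * ∫ t in (0:ℝ)..x, φ t := by
    rw [hg.2 x hx, mul_assoc μ]
  refine ((((hasDerivAt_rpow_neg_mul_exp_div γ α hx).const_mul μ).hasDerivWithinAt.mul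
    hprim).congr_of_eventuallyEq hsol hgx).congr_deriv ?_
  rw [volterraDeriv, hgx]
  linear_combination (μ * S x) * rpow_neg_mul_exp_div_mul_rpow_sub_two_mul_exp γ α hx

theorem sub_eq_integral_volterraDeriv (hγ : 1 < γ) (hα : 0 ≤ α) (hF : IsCDF F)
    (hg : IsVolterraSol γ α μ Φ₀ F g) {a b : ℝ} (ha : 0 < a) (hab : a ≤ b) :
    g b - g a = ∫ t in a..b, volterraDeriv γ α μ Φ₀ F g t := by
  have hIcc : Icc a b ⊆ Ioi 0 := fun t ht => ha.trans_le ht.1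
  refine (intervalIntegral.integral_eq_sub_of_hasDeriv_right_of_le hab
    (hg.1.mono (hIcc.trans Ioi_subset_Ici_self))
    (fun x hx => hg.hasDerivWithinAt_Ioi hγ hα hF (ha.trans hx.1)) ?_).symm
  rw [intervalIntegrable_iff_integrableOn_Icc_of_le hab]
  exact (locallyIntegrableOn_volterraDeriv hF hg.1).integrableOn_compact_subset hIcc
    isCompact_Icc

end IsVolterraSol

theorem stmt16_general (γ α μ : ℝ) (hγ : 1 < γ) (hα : 0 < α)
    (F : ℝ → ℝ) (hF : IsCDF F) (Φ₀ : ℝ)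
    (g : ℝ → ℝ) (hg : IsVolterraSol γ α μ Φ₀ F g) :
    ∃ h : ℝ → ℝ, LocallyIntegrableOn h (Set.Ioi 0) volume ∧
      (∀ a b : ℝ, 0 < a → a < b → g b - g a = ∫ t in a..b, h t) ∧
      ∀ᵐ u ∂(volume.restrict (Set.Ioi (0:ℝ))),
        u ^ 2 * h u + (γ * u + α) * g u = μ * Φ₀ * Fbar F u + μ * Bop F g u := by
  refine ⟨volterraDeriv γ α μ Φ₀ F g, locallyIntegrableOn_volterraDeriv hF hg.1,
    fun a b ha hab => hg.sub_eq_integral_volterraDeriv hγ hα.le hF ha hab.le, ?_⟩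
  filter_upwards [ae_restrict_mem measurableSet_Ioi] with u (hu : 0 < u)
  rw [volterraDeriv]
  field_simp
  ring

theorem stmt16 (γ α μ : ℝ) (hγ : 1 < γ) (hα : 0 < α) (hμ : 0 < μ)
    (F : ℝ → ℝ) (hF : IsCDF F) (Φ₀ : ℝ) (hΦ₀ : 0 < Φ₀)
    (g : ℝ → ℝ) (hg : IsVolterraSol γ α μ Φ₀ F g)
    (hbd : ∃ M : ℝ, ∀ u : ℝ, 0 ≤ u → |g u| ≤ M) :
    ∃ h : ℝ → ℝ, LocallyIntegrableOn h (Set.Ioi 0) volume ∧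
      (∀ a b : ℝ, 0 < a → a < b → g b - g a = ∫ t in a..b, h t) ∧
      ∀ᵐ u ∂(volume.restrict (Set.Ioi (0:ℝ))),
        u ^ 2 * h u + (γ * u + α) * g u = μ * Φ₀ * Fbar F u + μ * Bop F g u :=
  stmt16_general γ α μ hγ hα F hF Φ₀ g hg
end
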